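/- arXiv:math/0403187 — 5 statements merged into one kernel-verified Lean document; each statement's English description precedes it below -/
import Mathlib

section
/- Let A and B be 2×2 Hermitian complex matrices and suppose w ∈ ℂ², w ≠ 0, satisfies A·w = a·w and B·w = b·w for some reals a, b > 0. Set β := √(a/b). Then for every n ∈ ℕ the ℂ²-valued function Φ(x) := φ_n^β(x)·w satisfies, for all x ∈ ℝ, -B·Φ''(x) + x²·A·Φ(x) = √(a·b)·(2n+1)·Φ(x); that is, w φ_n^β is a pointwise eigenfunction of H_{A,B} with eigenvalue √(ab)(2n+1). -/
open Real

/-- The `n`-th physicists' Hermite polynomial (as a function),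
`h_n(x) = (-1)^n e^{x²} (d/dx)^n e^{-x²}`. -/
noncomputable def physHermite (n : ℕ) (x : ℝ) : ℝ :=
  (-1) ^ n * Real.exp (x ^ 2) * iteratedDeriv n (fun y : ℝ => Real.exp (-y ^ 2)) x

/-- The normalized Hermite functions
`φ_n^α(x) = α^{1/4} h_n(√α x) e^{-α x²/2} / √(2^n n! √π)`. -/
noncomputable def phi (α : ℝ) (n : ℕ) (x : ℝ) : ℝ :=
  α ^ ((1 : ℝ) / 4) * physHermite n (Real.sqrt α * x) * Real.exp (-α * x ^ 2 / 2) /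
    Real.sqrt (2 ^ n * n.factorial * Real.sqrt Real.pi)

section AuxHermite
open Polynomial

noncomputable def PH : ℕ → Polynomial ℝ
  | 0 => 1
  | n + 1 => C 2 * X * PH n - derivative (PH n)

lemma PH_succ (n : ℕ) : PH (n + 1) = C 2 * X * PH n - derivative (PH n) := rfl

lemma PH_deriv (n : ℕ) : derivative (PH (n + 1)) = C (2 * (n + 1) : ℝ) * PH n := by
  induction n with
  | zero => simp [PH]
  | succ m ih =>
    rw [PH_succ (m + 1), derivative_sub, derivative_mul, derivative_mul, ih, derivative_C,
      derivative_X, derivative_mul, derivative_C]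
    rw [PH_succ m]
    push_cast
    simp only [C_add, C_mul, C_1, map_ofNat]
    ring

lemma PH_ode (n : ℕ) : derivative (derivative (PH n)) =
    C 2 * X * derivative (PH n) - C (2 * n : ℝ) * PH n := by
  cases n with
  | zero => simp [PH]
  | succ m =>
    rw [PH_deriv, derivative_mul, derivative_C, PH_succ]
    push_cast
    ring

lemma PH_natDegree_le (n : ℕ) : (PH n).natDegree ≤ n := by
  induction n with
  | zero => simp [PH]
  | succ m ih =>
    rw [PH_succ]
    refine (natDegree_sub_le _ _).trans (max_le ?_ ?_)
    · calc (C 2 * X * PH m).natDegree ≤ (C 2 * X : Polynomial ℝ).natDegree + (PH m).natDegree :=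
            natDegree_mul_le
        _ ≤ 1 + m := add_le_add (natDegree_C_mul_X (2:ℝ) two_ne_zero).le ih
        _ = m + 1 := by omega
    · exact (natDegree_derivative_le _).trans (by omega)

lemma PH_coeff (n : ℕ) : (PH n).coeff n = 2 ^ n := by
  induction n with
  | zero => simp [PH]
  | succ m ih =>
    rw [PH_succ, coeff_sub, coeff_derivative,
      coeff_eq_zero_of_natDegree_lt ((PH_natDegree_le m).trans_lt (by omega))]
    have : C 2 * X * PH m = C 2 * (X * PH m) := by ring
    rw [this, coeff_C_mul, coeff_X_mul, ih]
    ring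

lemma PH_ne_zero (n : ℕ) : PH n ≠ 0 := fun h => by
  have := PH_coeff n
  rw [h] at this
  simp at this
  exact absurd this (by positivity)

lemma hasDerivAt_pe (p : Polynomial ℝ) (y : ℝ) :
    HasDerivAt (fun y : ℝ => p.eval y * Real.exp (-(y ^ 2) / 2))
      ((derivative p - X * p).eval y * Real.exp (-(y ^ 2) / 2)) y := by
  have h1 : HasDerivAt (fun y : ℝ => -(y ^ 2) / 2) (-y) y := by
    have := ((hasDerivAt_pow 2 y).neg).div_const 2
    refine this.congr_deriv ?_
    ring
  have h2 := h1.exp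
  have := (p.hasDerivAt y).mul h2
  refine this.congr_deriv ?_
  simp [eval_mul, eval_sub]
  ring

lemma hasDerivAt_u (n : ℕ) (y : ℝ) :
    HasDerivAt (fun y : ℝ => (PH n).eval y * Real.exp (-(y ^ 2) / 2))
      ((derivative (PH n) - X * PH n).eval y * Real.exp (-(y ^ 2) / 2)) y :=
  hasDerivAt_pe _ y

lemma hasDerivAt_u1 (n : ℕ) (y : ℝ) :
    HasDerivAt (fun y : ℝ => (derivative (PH n) - X * PH n).eval y * Real.exp (-(y ^ 2) / 2))
      ((y ^ 2 - (2 * n + 1)) * ((PH n).eval y * Real.exp (-(y ^ 2) / 2))) y := by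
  have := hasDerivAt_pe (derivative (PH n) - X * PH n) y
  convert this using 1
  have key : derivative (derivative (PH n) - X * PH n) - X * (derivative (PH n) - X * PH n)
      = (X ^ 2 - C (2 * n + 1 : ℝ)) * PH n := by
    rw [derivative_sub, derivative_mul, derivative_X, PH_ode]
    push_cast
    simp only [C_add, C_mul, C_1, map_ofNat, Polynomial.C_eq_natCast]
    ring
  rw [key]
  simp [eval_mul, eval_sub, eval_add, eval_pow]
  ring

lemma hasDerivAt_gp (n : ℕ) (x : ℝ) :
    HasDerivAt (fun x : ℝ => (-1) ^ n * (PH n).eval x * Real.exp (-x ^ 2))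
      ((-1) ^ (n + 1) * (PH (n + 1)).eval x * Real.exp (-x ^ 2)) x := by
  have h2 : HasDerivAt (fun y : ℝ => -y ^ 2) (-(2 * x)) x := by
    have := (hasDerivAt_pow 2 x).neg
    refine this.congr_deriv ?_
    ring
  have h3 := h2.exp
  have h4 := (((PH n).hasDerivAt x).const_mul ((-1 : ℝ) ^ n)).mul h3
  refine h4.congr_deriv ?_
  rw [PH_succ]
  simp [eval_sub, eval_mul, pow_succ]
  ring

lemma iteratedDeriv_gauss (n : ℕ) :
    iteratedDeriv n (fun y : ℝ => Real.exp (-y ^ 2)) =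
      fun x => (-1) ^ n * (PH n).eval x * Real.exp (-x ^ 2) := by
  induction n with
  | zero => funext x; simp [PH]
  | succ m ih =>
    rw [iteratedDeriv_succ, ih]
    funext x
    exact (hasDerivAt_gp m x).deriv

lemma physHermite_eq (n : ℕ) (x : ℝ) : physHermite n x = (PH n).eval x := by
  unfold physHermite
  rw [iteratedDeriv_gauss]
  have h1 : (-1 : ℝ) ^ n * (-1) ^ n = 1 := by
    rw [← pow_add]
    exact Even.neg_one_pow ⟨n, rfl⟩
  have h2 : Real.exp (x ^ 2) * Real.exp (-x ^ 2) = 1 := by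
    rw [← Real.exp_add]
    simp
  calc (-1 : ℝ) ^ n * Real.exp (x ^ 2) * ((-1) ^ n * (PH n).eval x * Real.exp (-x ^ 2))
      = ((-1 : ℝ) ^ n * (-1) ^ n) * (Real.exp (x ^ 2) * Real.exp (-x ^ 2)) * (PH n).eval x := by
        ring
    _ = (PH n).eval x := by rw [h1, h2]; ring

noncomputable def cst (β : ℝ) (n : ℕ) : ℝ :=
  β ^ ((1 : ℝ) / 4) / Real.sqrt (2 ^ n * n.factorial * Real.sqrt Real.pi)

lemma phi_eq (β : ℝ) (hβ : 0 ≤ β) (n : ℕ) :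
    phi β n = fun x => cst β n *
      ((PH n).eval (Real.sqrt β * x) * Real.exp (-((Real.sqrt β * x) ^ 2) / 2)) := by
  funext x
  unfold phi cst
  rw [physHermite_eq]
  rw [show -((Real.sqrt β * x) ^ 2) / 2 = -β * x ^ 2 / 2 by
    rw [mul_pow, Real.sq_sqrt hβ]; ring]
  ring

noncomputable def phi1 (β : ℝ) (n : ℕ) (x : ℝ) : ℝ :=
  cst β n * Real.sqrt β * ((derivative (PH n) - X * PH n).eval (Real.sqrt β * x) *
    Real.exp (-((Real.sqrt β * x) ^ 2) / 2))

lemma hasDerivAt_sqrt_mul (β x : ℝ) :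
    HasDerivAt (fun x : ℝ => Real.sqrt β * x) (Real.sqrt β) x := by
  simpa using (hasDerivAt_id x).const_mul (Real.sqrt β)

lemma phi_hasDerivAt (β : ℝ) (hβ : 0 ≤ β) (n : ℕ) (x : ℝ) :
    HasDerivAt (phi β n) (phi1 β n x) x := by
  rw [phi_eq β hβ n]
  have h := ((hasDerivAt_u n (Real.sqrt β * x)).comp x (hasDerivAt_sqrt_mul β x)).const_mul
    (cst β n)
  refine h.congr_deriv ?_
  unfold phi1
  ring

lemma phi1_hasDerivAt (β : ℝ) (hβ : 0 ≤ β) (n : ℕ) (x : ℝ) :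
    HasDerivAt (phi1 β n) (β * (β * x ^ 2 - (2 * n + 1)) * phi β n x) x := by
  have h := ((hasDerivAt_u1 n (Real.sqrt β * x)).comp x (hasDerivAt_sqrt_mul β x)).const_mul
    (cst β n * Real.sqrt β)
  have h2 : HasDerivAt (phi1 β n)
      (cst β n * Real.sqrt β * ((Real.sqrt β * x) ^ 2 - (2 * n + 1)) *
        ((PH n).eval (Real.sqrt β * x) * Real.exp (-((Real.sqrt β * x) ^ 2) / 2)) *
        Real.sqrt β) x := by
    unfold phi1
    refine h.congr_deriv ?_
    ring
  convert h2 using 1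
  rw [phi_eq β hβ n]
  have hs : Real.sqrt β * Real.sqrt β = β := Real.mul_self_sqrt hβ
  have hsx : (Real.sqrt β * x) ^ 2 = β * x ^ 2 := by rw [mul_pow, Real.sq_sqrt hβ]
  simp only [hsx]
  linear_combination (-(cst β n * (β * x ^ 2 - (2 * (n : ℝ) + 1)) *
    ((PH n).eval (Real.sqrt β * x) * Real.exp (-(β * x ^ 2) / 2)))) * hs

lemma deriv_phi (β : ℝ) (hβ : 0 ≤ β) (n : ℕ) : deriv (phi β n) = phi1 β n :=
  funext fun x => (phi_hasDerivAt β hβ n x).deriv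

lemma cst_pos (β : ℝ) (hβ : 0 < β) (n : ℕ) : 0 < cst β n := by
  unfold cst
  have h1 : 0 < β ^ ((1 : ℝ) / 4) := Real.rpow_pos_of_pos hβ _
  have h2 : 0 < Real.sqrt (2 ^ n * n.factorial * Real.sqrt Real.pi) := by
    apply Real.sqrt_pos.mpr
    have : (0:ℝ) < Real.sqrt Real.pi := Real.sqrt_pos.mpr Real.pi_pos
    positivity
  positivity

lemma phi_exists_ne (β : ℝ) (hβ : 0 < β) (n : ℕ) : ∃ x, phi β n x ≠ 0 := by
  obtain ⟨x0, hx0⟩ : ∃ x0, ¬ (PH n).IsRoot x0 := by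
    have h := (Polynomial.finite_setOf_isRoot (PH_ne_zero n)).infinite_compl
    obtain ⟨x0, hx0⟩ := h.nonempty
    exact ⟨x0, hx0⟩
  have hs : Real.sqrt β ≠ 0 := (Real.sqrt_pos.mpr hβ).ne'
  refine ⟨x0 / Real.sqrt β, ?_⟩
  rw [phi_eq β hβ.le n]
  simp only
  rw [mul_div_cancel₀ _ hs]
  exact mul_ne_zero (cst_pos β hβ n).ne'
    (mul_ne_zero hx0 (Real.exp_ne_zero _))

end AuxHermite

open Polynomial in
/-- if `w ≠ 0` is a common eigenvector of the Hermitian matrices `A`, `B`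
with eigenvalues `a, b > 0`, and `β = √(a/b)`, then `Φ = φ_n^β · w` is a pointwise
eigenfunction of `H_{A,B} = B(-∂ₓ²) + A x²` with eigenvalue `√(ab)(2n+1)`. -/
theorem common_eigenvector_eigenfunction
    (A B : Matrix (Fin 2) (Fin 2) ℂ) (hA : A.IsHermitian) (hB : B.IsHermitian)
    (w : Fin 2 → ℂ) (hw : w ≠ 0) (a b : ℝ) (ha : 0 < a) (hb : 0 < b)
    (hAw : A.mulVec w = (a : ℂ) • w) (hBw : B.mulVec w = (b : ℂ) • w)
    (β : ℝ) (hβ : β = Real.sqrt (a / b)) (n : ℕ)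
    (Φ : ℝ → Fin 2 → ℂ) (hΦ : Φ = fun x => (phi β n x : ℂ) • w) :
    Φ ≠ 0 ∧ Differentiable ℝ Φ ∧ Differentiable ℝ (deriv Φ) ∧
      ∀ x : ℝ, -(B.mulVec (deriv (deriv Φ) x)) + ((x : ℂ) ^ 2) • A.mulVec (Φ x)
        = ((Real.sqrt (a * b) * (2 * n + 1) : ℝ) : ℂ) • Φ x := by
  have hβpos : 0 < β := hβ ▸ Real.sqrt_pos.mpr (div_pos ha hb)
  have hβ2 : β ^ 2 = a / b := by rw [hβ]; exact Real.sq_sqrt (div_pos ha hb).le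
  have hba : b * β = Real.sqrt (a * b) := by
    rw [hβ, ← Real.sqrt_sq hb.le, ← Real.sqrt_mul (sq_nonneg b)]
    congr 1
    field_simp
    rw [Real.sq_sqrt (sq_nonneg b)]
  have hbb : b * β ^ 2 = a := by rw [hβ2]; field_simp
  have hD1 : ∀ x, HasDerivAt Φ (((phi1 β n x : ℝ) : ℂ) • w) x := fun x => by
    rw [hΦ]
    exact ((phi_hasDerivAt β hβpos.le n x).ofReal_comp).smul_const w
  have hdΦ : deriv Φ = fun x => ((phi1 β n x : ℝ) : ℂ) • w := funext fun x => (hD1 x).deriv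
  have hD2 : ∀ x, HasDerivAt (deriv Φ)
      (((β * (β * x ^ 2 - (2 * n + 1)) * phi β n x : ℝ) : ℂ) • w) x := fun x => by
    rw [hdΦ]
    exact ((phi1_hasDerivAt β hβpos.le n x).ofReal_comp).smul_const w
  have hddΦ : deriv (deriv Φ) = fun x =>
      ((β * (β * x ^ 2 - (2 * n + 1)) * phi β n x : ℝ) : ℂ) • w :=
    funext fun x => (hD2 x).deriv
  refine ⟨?_, fun x => (hD1 x).differentiableAt, fun x => (hD2 x).differentiableAt, ?_⟩
  · obtain ⟨x0, hx0⟩ := phi_exists_ne β hβpos n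
    intro h0
    apply hw
    have := congrFun h0 x0
    rw [hΦ] at this
    simp only [Pi.zero_apply] at this
    rcases smul_eq_zero.mp this with h | h
    · exact absurd (Complex.ofReal_eq_zero.mp h) hx0
    · exact h
  · intro x
    rw [hddΦ, hΦ]
    simp only
    rw [Matrix.mulVec_smul, Matrix.mulVec_smul, hBw, hAw]
    rw [smul_smul, smul_smul, smul_smul, smul_smul, ← neg_smul, ← add_smul]
    congr 1
    push_cast
    have hid : -(β * (β * x ^ 2 - (2 * ↑n + 1)) * phi β n x * b)
        + x ^ 2 * (phi β n x * a) = Real.sqrt (a * b) * (2 * ↑n + 1) * phi β n x := by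
      rw [← hba]
      linear_combination (-(x ^ 2 * phi β n x)) * hbb
    calc -(((β : ℂ) * ((β : ℂ) * (x : ℂ) ^ 2 - (2 * (n : ℂ) + 1)) * (phi β n x : ℂ)) * (b : ℂ))
          + (x : ℂ) ^ 2 * (phi β n x : ℂ) * (a : ℂ)
        = (((-(β * (β * x ^ 2 - (2 * n + 1)) * phi β n x * b)
            + x ^ 2 * (phi β n x * a) : ℝ)) : ℂ) := by push_cast; ring
      _ = _ := by rw [hid]; push_cast; ring
end

section
/- Suppose u₀, u₁ ∈ ℂ² are not both zero, α > 0, λ ∈ ℝ, and the function Φ(x) := (u₀ + u₁ x) e^{-α x²/2} is a pointwise eigenfunction of H_{A,B} with eigenvalue λ. Then AB = BA (equivalently, b = 1 or ξ = 0). -/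
/-!
Dividing the eigenvalue equation by the Gaussian leaves a cubic polynomial identity in `x`, whose
coefficients give `α B u₀ = l u₀`, `3α B u₁ = l u₁` and `A uᵢ = α² B uᵢ`. So a nonzero `uᵢ` is a
common eigenvector of `A` and `B = diag(1, b)`. For `b ≠ 1` the eigenvectors of `B` lie on the
coordinate axes, and `A` maps a coordinate axis into itself only when `ξ = 0`.
-/

/-- The matrix `A = [[a, ξ], [conj ξ, c]]`. -/
noncomputable def Amat (a c : ℝ) (ξ : ℂ) : Matrix (Fin 2) (Fin 2) ℂ :=
  !![(a : ℂ), ξ; (starRingEnd ℂ) ξ, (c : ℂ)]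

/-- The matrix `B = [[1, 0], [0, b]]`. -/
noncomputable def Bmat (b : ℝ) : Matrix (Fin 2) (Fin 2) ℂ :=
  !![1, 0; 0, (b : ℂ)]

/-- `Φ : ℝ → ℂ²` is a pointwise eigenfunction of `H_{A,B} = B(-∂ₓ²) + A x²` with
eigenvalue `l`: it is twice differentiable, not identically zero, and satisfies
`-B Φ'' + x² A Φ = l Φ` everywhere. -/
def IsPtEigenfun (A B : Matrix (Fin 2) (Fin 2) ℂ) (Φ : ℝ → Fin 2 → ℂ) (l : ℝ) : Prop :=
  Φ ≠ 0 ∧ Differentiable ℝ Φ ∧ Differentiable ℝ (deriv Φ) ∧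
    ∀ x : ℝ, -(B.mulVec (deriv (deriv Φ) x)) + ((x : ℂ) ^ 2) • A.mulVec (Φ x) = (l : ℂ) • Φ x

open Matrix

section Gaussian

variable {E : Type*} [NormedAddCommGroup E] [NormedSpace ℂ E]

theorem hasDerivAt_gaussian_smul (α : ℝ) {g : ℝ → E} {g' : E} {x : ℝ} (hg : HasDerivAt g g' x) :
    HasDerivAt (fun y : ℝ => (Real.exp (-α * y ^ 2 / 2) : ℂ) • g y)
      ((Real.exp (-α * x ^ 2 / 2) : ℂ) • (g' - ((α : ℂ) * x) • g x)) x := by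
  have hexp : HasDerivAt (fun y : ℝ => -α * y ^ 2 / 2) (-α * x) x := by
    refine (((hasDerivAt_pow 2 x).const_mul (-α)).div_const 2).congr_deriv ?_
    norm_num
    ring
  refine (((Real.hasDerivAt_exp _).comp x hexp).ofReal_comp.smul hg).congr_deriv ?_
  simp only [Function.comp_apply]
  push_cast
  module

theorem deriv_deriv_gaussian_smul_linear (α : ℝ) (u₀ u₁ : E) (x : ℝ) :
    deriv (deriv fun y : ℝ => (Real.exp (-α * y ^ 2 / 2) : ℂ) • (u₀ + (y : ℂ) • u₁)) x =
      (Real.exp (-α * x ^ 2 / 2) : ℂ) •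
        (((α : ℂ) ^ 2 * x ^ 2 - α) • (u₀ + (x : ℂ) • u₁) - (2 * α * x : ℂ) • u₁) := by
  have hlin (y : ℝ) : HasDerivAt (fun y : ℝ => u₀ + (y : ℂ) • u₁) u₁ y := by
    simpa using ((hasDerivAt_id y).ofReal_comp.smul_const u₁).const_add u₀
  have hderiv : deriv (fun y : ℝ => (Real.exp (-α * y ^ 2 / 2) : ℂ) • (u₀ + (y : ℂ) • u₁)) =
      fun y => (Real.exp (-α * y ^ 2 / 2) : ℂ) • (u₁ - ((α : ℂ) * y) • (u₀ + (y : ℂ) • u₁)) :=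
    funext fun y => (hasDerivAt_gaussian_smul α (hlin y)).deriv
  have hinner : HasDerivAt (fun y : ℝ => u₁ - ((α : ℂ) * y) • (u₀ + (y : ℂ) • u₁))
      (-((α : ℂ) • (u₀ + (x : ℂ) • u₁) + ((α : ℂ) * x) • u₁)) x := by
    refine ((((hasDerivAt_id x).ofReal_comp.const_mul (α : ℂ)).smul (hlin x)).const_sub u₁
      ).congr_deriv ?_
    simp only [id, Complex.ofReal_one]
    module
  rw [hderiv, (hasDerivAt_gaussian_smul α hinner).deriv]
  congr 1
  module

end Gaussian

theorem eq_zero_of_forall_cubic_eq_zero {E : Type*} [AddCommGroup E] [Module ℂ E]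
    {v₀ v₁ v₂ v₃ : E}
    (h : ∀ x : ℝ, v₀ + (x : ℂ) • v₁ + (x : ℂ) ^ 2 • v₂ + (x : ℂ) ^ 3 • v₃ = 0) :
    v₀ = 0 ∧ v₁ = 0 ∧ v₂ = 0 ∧ v₃ = 0 := by
  have h₀ := h 0
  have h₁ := h 1
  have hm := h (-1)
  have h₂ := h 2
  push_cast at h₀ h₁ hm h₂
  refine ⟨?_, ?_, ?_, ?_⟩
  · linear_combination (norm := module) h₀
  · linear_combination (norm := module) (-1/2 : ℂ) • h₀ + h₁ - (1/3 : ℂ) • hm - (1/6 : ℂ) • h₂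
  · linear_combination (norm := module) (-1 : ℂ) • h₀ + (1/2 : ℂ) • h₁ + (1/2 : ℂ) • hm
  · linear_combination (norm := module)
      (1/2 : ℂ) • h₀ - (1/2 : ℂ) • h₁ - (1/6 : ℂ) • hm + (1/6 : ℂ) • h₂

theorem Amat_mul_Bmat_eq_Bmat_mul_Amat_iff {a c b : ℝ} {ξ : ℂ} :
    Amat a c ξ * Bmat b = Bmat b * Amat a c ξ ↔ b = 1 ∨ ξ = 0 := by
  rw [Amat, Bmat, mul_fin_two, mul_fin_two]
  constructor
  · intro h
    have hξb : ξ * ((b : ℂ) - 1) = 0 := by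
      linear_combination (by simpa using congr_fun₂ h 0 1 : ξ * b = ξ)
    rcases mul_eq_zero.mp hξb with hξ | hb
    · exact Or.inr hξ
    · exact Or.inl (by exact_mod_cast sub_eq_zero.mp hb)
  · rintro (rfl | rfl) <;> simp [mul_comm]

theorem eq_one_or_eq_zero_of_common_eigenvector {a c b : ℝ} {ξ : ℂ} {u : Fin 2 → ℂ} (hu : u ≠ 0)
    {μ ν : ℂ} (hB : Bmat b *ᵥ u = μ • u) (hA : Amat a c ξ *ᵥ u = ν • u) : b = 1 ∨ ξ = 0 := by
  have hB₀ : u 0 = μ * u 0 := by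
    simpa [Bmat, mulVec, dotProduct, Fin.sum_univ_two] using congrFun hB 0
  have hB₁ : (b : ℂ) * u 1 = μ * u 1 := by
    simpa [Bmat, mulVec, dotProduct, Fin.sum_univ_two, -mul_eq_mul_right_iff] using congrFun hB 1
  have hA₀ : a * u 0 + ξ * u 1 = ν * u 0 := by
    simpa [Amat, mulVec, dotProduct, Fin.sum_univ_two] using congrFun hA 0
  have hA₁ : starRingEnd ℂ ξ * u 0 + c * u 1 = ν * u 1 := by
    simpa [Amat, mulVec, dotProduct, Fin.sum_univ_two] using congrFun hA 1
  rcases eq_or_ne (u 0) 0 with h₀ | h₀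
  · have h₁ : u 1 ≠ 0 := fun h₁ => hu (by ext i; fin_cases i <;> assumption)
    rw [h₀, mul_zero, zero_add, mul_zero] at hA₀
    exact Or.inr ((mul_eq_zero.mp hA₀).resolve_right h₁)
  · have hμ : μ = 1 := (mul_left_eq_self₀.mp hB₀.symm).resolve_right h₀
    rcases eq_or_ne (u 1) 0 with h₁ | h₁
    · rw [h₁, mul_zero, add_zero, mul_zero, mul_eq_zero, map_eq_zero] at hA₁
      exact Or.inr (hA₁.resolve_right h₀)
    · exact Or.inl (by exact_mod_cast hμ ▸ mul_right_cancel₀ h₁ hB₁)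

theorem IsPtEigenfun.gaussian_linear_coeffs {A B : Matrix (Fin 2) (Fin 2) ℂ} {α l : ℝ}
    {u₀ u₁ : Fin 2 → ℂ}
    (heig : IsPtEigenfun A B (fun x => (Real.exp (-α * x ^ 2 / 2) : ℂ) • (u₀ + (x : ℂ) • u₁)) l) :
    (α : ℂ) • B *ᵥ u₀ = (l : ℂ) • u₀ ∧ (3 * α : ℂ) • B *ᵥ u₁ = (l : ℂ) • u₁ ∧
      A *ᵥ u₀ = (α : ℂ) ^ 2 • B *ᵥ u₀ ∧ A *ᵥ u₁ = (α : ℂ) ^ 2 • B *ᵥ u₁ := by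
  have hcubic (x : ℝ) :
      ((α : ℂ) • B *ᵥ u₀ - (l : ℂ) • u₀) + (x : ℂ) • ((3 * α : ℂ) • B *ᵥ u₁ - (l : ℂ) • u₁)
        + (x : ℂ) ^ 2 • (A *ᵥ u₀ - (α : ℂ) ^ 2 • B *ᵥ u₀)
        + (x : ℂ) ^ 3 • (A *ᵥ u₁ - (α : ℂ) ^ 2 • B *ᵥ u₁) = 0 := by
    have h := heig.2.2.2 x
    rw [deriv_deriv_gaussian_smul_linear] at h
    simp only [mulVec_smul, mulVec_add, mulVec_sub] at h
    have hexp : (Real.exp (-α * x ^ 2 / 2) : ℂ) ≠ 0 :=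
      Complex.ofReal_ne_zero.mpr (Real.exp_ne_zero _)
    refine smul_right_injective _ hexp ?_
    linear_combination (norm := module) h
  simpa only [sub_eq_zero] using eq_zero_of_forall_cubic_eq_zero hcubic

theorem eigenfunction_deg_one_implies_commute_general
    (a c b : ℝ) (ξ : ℂ)
    (u₀ u₁ : Fin 2 → ℂ) (hu : u₀ ≠ 0 ∨ u₁ ≠ 0) (α : ℝ) (hα : 0 < α) (l : ℝ)
    (heig : IsPtEigenfun (Amat a c ξ) (Bmat b)
      (fun x => (Real.exp (-α * x ^ 2 / 2) : ℂ) • (u₀ + (x : ℂ) • u₁)) l) :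
    Amat a c ξ * Bmat b = Bmat b * Amat a c ξ ∧ (b = 1 ∨ ξ = 0) := by
  obtain ⟨hB₀, hB₁, hA₀, hA₁⟩ := heig.gaussian_linear_coeffs
  have hcommon (u : Fin 2 → ℂ) (κ : ℂ) (hu : u ≠ 0) (hκ : κ ≠ 0)
      (hB : κ • Bmat b *ᵥ u = (l : ℂ) • u) (hA : Amat a c ξ *ᵥ u = (α : ℂ) ^ 2 • Bmat b *ᵥ u) :
      b = 1 ∨ ξ = 0 := by
    have hBu : Bmat b *ᵥ u = (κ⁻¹ * l) • u := by rw [mul_smul, ← hB, inv_smul_smul₀ hκ]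
    rw [hBu, smul_smul] at hA
    exact eq_one_or_eq_zero_of_common_eigenvector hu hBu hA
  have hα' : (α : ℂ) ≠ 0 := Complex.ofReal_ne_zero.mpr hα.ne'
  have hbξ : b = 1 ∨ ξ = 0 := by
    rcases hu with hu | hu
    · exact hcommon u₀ α hu hα' hB₀ hA₀
    · exact hcommon u₁ (3 * α) hu (mul_ne_zero three_ne_zero hα') hB₁ hA₁
  exact ⟨Amat_mul_Bmat_eq_Bmat_mul_Amat_iff.mpr hbξ, hbξ⟩

/-- if `Φ(x) = (u₀ + u₁ x) e^{-αx²/2}` with `u₀, u₁` not both zero is a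
pointwise eigenfunction of `H_{A,B}`, then `AB = BA`, i.e. `b = 1` or `ξ = 0`. -/
theorem eigenfunction_deg_one_implies_commute
    (a c b : ℝ) (ξ : ℂ) (ha : 0 < a) (hc : 0 < c) (hb : 1 ≤ b)
    (hξ : ‖ξ‖ ^ 2 < a * c)
    (u₀ u₁ : Fin 2 → ℂ) (hu : u₀ ≠ 0 ∨ u₁ ≠ 0) (α : ℝ) (hα : 0 < α) (l : ℝ)
    (heig : IsPtEigenfun (Amat a c ξ) (Bmat b)
      (fun x => (Real.exp (-α * x ^ 2 / 2) : ℂ) • (u₀ + (x : ℂ) • u₁)) l) :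
    Amat a c ξ * Bmat b = Bmat b * Amat a c ξ ∧ (b = 1 ∨ ξ = 0) :=
  eigenfunction_deg_one_implies_commute_general a c b ξ u₀ u₁ hu α hα l heig
end

section
/- Let u₀, u₂ ∈ ℂ², α > 0, λ ∈ ℝ, and set Φ(x) := (u₀ + u₂ x²) e^{-α x²/2}. Then -B·Φ''(x) + x²·A·Φ(x) = λ·Φ(x) holds for all x ∈ ℝ if and only if the following three matrix equations hold: (A - α²B)·u₂ = 0, (A - α²B)·u₀ + (5αB - λ)·u₂ = 0, and (αB - λ)·u₀ - 2B·u₂ = 0. -/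
section Gaussian

variable {E : Type*} [NormedAddCommGroup E] [NormedSpace ℂ E] (α : ℝ)

theorem hasDerivAt_ofReal_exp_neg_mul_sq_div_two (x : ℝ) :
    HasDerivAt (fun x : ℝ => (Real.exp (-α * x ^ 2 / 2) : ℂ))
      (-(α * x : ℂ) * Real.exp (-α * x ^ 2 / 2)) x := by
  have hexponent : HasDerivAt (fun x : ℝ => -α * x ^ 2 / 2) (-α * x) x := by
    refine (((hasDerivAt_pow 2 x).const_mul (-α)).div_const 2).congr_deriv ?_
    push_cast
    ring
  refine ((Real.hasDerivAt_exp _).comp x hexponent).ofReal_comp.congr_deriv ?_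
  push_cast
  ring

theorem HasDerivAt.ofReal_exp_neg_mul_sq_div_two_smul {p : ℝ → E} {p' : E} {x : ℝ}
    (hp : HasDerivAt p p' x) :
    HasDerivAt (fun x : ℝ => (Real.exp (-α * x ^ 2 / 2) : ℂ) • p x)
      ((Real.exp (-α * x ^ 2 / 2) : ℂ) • (p' - (α * x : ℂ) • p x)) x := by
  refine ((hasDerivAt_ofReal_exp_neg_mul_sq_div_two α x).smul hp).congr_deriv ?_
  module

theorem deriv_deriv_ofReal_exp_neg_mul_sq_div_two_smul_quadratic (u₀ u₂ : E) (x : ℝ) :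
    deriv (deriv fun x : ℝ => (Real.exp (-α * x ^ 2 / 2) : ℂ) • (u₀ + (x : ℂ) ^ 2 • u₂)) x
      = (Real.exp (-α * x ^ 2 / 2) : ℂ) • ((x : ℂ) ^ 4 • ((α : ℂ) ^ 2 • u₂)
          + (x : ℂ) ^ 2 • ((α : ℂ) ^ 2 • u₀ - (5 * α : ℂ) • u₂) + ((2 : ℂ) • u₂ - (α : ℂ) • u₀)) := by
  have hderiv : deriv (fun x : ℝ => (Real.exp (-α * x ^ 2 / 2) : ℂ) • (u₀ + (x : ℂ) ^ 2 • u₂))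
      = fun x : ℝ => (Real.exp (-α * x ^ 2 / 2) : ℂ) •
          ((x : ℂ) • ((2 : ℂ) • u₂ - (α : ℂ) • u₀) + (x : ℂ) ^ 3 • (-(α : ℂ) • u₂)) := by
    funext x
    refine HasDerivAt.deriv ?_
    refine ((((hasDerivAt_pow 2 (x : ℂ)).comp_ofReal.smul_const u₂).const_add
      u₀).ofReal_exp_neg_mul_sq_div_two_smul α).congr_deriv ?_
    module
  rw [hderiv]
  refine HasDerivAt.deriv ?_
  refine (((Complex.ofRealCLM.hasDerivAt.smul_const ((2 : ℂ) • u₂ - (α : ℂ) • u₀)).add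
    ((hasDerivAt_pow 3 (x : ℂ)).comp_ofReal.smul_const
      (-(α : ℂ) • u₂))).ofReal_exp_neg_mul_sq_div_two_smul α).congr_deriv ?_
  simp only [Pi.add_apply, Complex.ofRealCLM_apply]
  module

end Gaussian

theorem even_quartic_smul_eq_zero_iff {M : Type*} [AddCommGroup M] [Module ℂ M] (w₄ w₂ w₀ : M) :
    (∀ x : ℝ, (x : ℂ) ^ 4 • w₄ + (x : ℂ) ^ 2 • w₂ + w₀ = 0) ↔ w₄ = 0 ∧ w₂ = 0 ∧ w₀ = 0 := by
  refine ⟨fun h => ?_, fun ⟨h₄, h₂, h₀⟩ x => by simp [h₄, h₂, h₀]⟩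
  have h₀ := h 0
  have h₁ := h 1
  have h₂ := h 2
  norm_num at h₀ h₁ h₂
  have hw₄ : (12 : ℂ) • w₄ = 0 := by
    linear_combination (norm := module) h₂ - (4 : ℂ) • h₁ + (3 : ℂ) • h₀
  have hw₄ : w₄ = 0 := (smul_eq_zero.mp hw₄).resolve_left (by norm_num)
  refine ⟨hw₄, ?_, h₀⟩
  linear_combination (norm := module) h₁ - h₀ - hw₄

theorem even_quadratic_eigen_equation_iff_general
    (a c b : ℝ) (ξ : ℂ)
    (u₀ u₂ : Fin 2 → ℂ) (α : ℝ) (l : ℝ)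
    (Φ : ℝ → Fin 2 → ℂ)
    (hΦ : Φ = fun x => (Real.exp (-α * x ^ 2 / 2) : ℂ) • (u₀ + ((x : ℂ) ^ 2) • u₂)) :
    (∀ x : ℝ, -((Bmat b).mulVec (deriv (deriv Φ) x))
        + ((x : ℂ) ^ 2) • (Amat a c ξ).mulVec (Φ x) = (l : ℂ) • Φ x)
      ↔ ((Amat a c ξ - ((α : ℂ) ^ 2) • Bmat b).mulVec u₂ = 0 ∧
          (Amat a c ξ - ((α : ℂ) ^ 2) • Bmat b).mulVec u₀
            + ((5 * (α : ℂ)) • Bmat b - (l : ℂ) • (1 : Matrix (Fin 2) (Fin 2) ℂ)).mulVec u₂ = 0 ∧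
          ((α : ℂ) • Bmat b - (l : ℂ) • (1 : Matrix (Fin 2) (Fin 2) ℂ)).mulVec u₀
            - (2 : ℂ) • (Bmat b).mulVec u₂ = 0) := by
  subst hΦ
  rw [← even_quartic_smul_eq_zero_iff]
  refine forall_congr' fun x => ?_
  have hexp : (Real.exp (-α * x ^ 2 / 2) : ℂ) ≠ 0 := by exact_mod_cast (Real.exp_pos _).ne'
  rw [deriv_deriv_ofReal_exp_neg_mul_sq_div_two_smul_quadratic, ← sub_eq_zero]
  refine (Eq.congr_left ?_).trans (smul_eq_zero_iff_right hexp)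
  simp only [Matrix.sub_mulVec, Matrix.smul_mulVec, Matrix.one_mulVec, Matrix.mulVec_add,
    Matrix.mulVec_sub, Matrix.mulVec_smul]
  module

/-- STATEMENT 7: `Φ(x) = (u₀ + u₂ x²) e^{-αx²/2}` satisfies `-BΦ'' + x²AΦ = λΦ`
for all `x` if and only if `(A - α²B)u₂ = 0`, `(A - α²B)u₀ + (5αB - λ)u₂ = 0` and
`(αB - λ)u₀ - 2Bu₂ = 0`. -/
theorem even_quadratic_eigen_equation_iff
    (a c b : ℝ) (ξ : ℂ) (ha : 0 < a) (hc : 0 < c) (hb : 1 ≤ b)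
    (hξ : ‖ξ‖ ^ 2 < a * c)
    (u₀ u₂ : Fin 2 → ℂ) (α : ℝ) (hα : 0 < α) (l : ℝ)
    (Φ : ℝ → Fin 2 → ℂ)
    (hΦ : Φ = fun x => (Real.exp (-α * x ^ 2 / 2) : ℂ) • (u₀ + ((x : ℂ) ^ 2) • u₂)) :
    (∀ x : ℝ, -((Bmat b).mulVec (deriv (deriv Φ) x))
        + ((x : ℂ) ^ 2) • (Amat a c ξ).mulVec (Φ x) = (l : ℂ) • Φ x)
      ↔ ((Amat a c ξ - ((α : ℂ) ^ 2) • Bmat b).mulVec u₂ = 0 ∧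
          (Amat a c ξ - ((α : ℂ) ^ 2) • Bmat b).mulVec u₀
            + ((5 * (α : ℂ)) • Bmat b - (l : ℂ) • (1 : Matrix (Fin 2) (Fin 2) ℂ)).mulVec u₂ = 0 ∧
          ((α : ℂ) • Bmat b - (l : ℂ) • (1 : Matrix (Fin 2) (Fin 2) ℂ)).mulVec u₀
            - (2 : ℂ) • (Bmat b).mulVec u₂ = 0) :=
  even_quadratic_eigen_equation_iff_general a c b ξ u₀ u₂ α l Φ hΦ
end

section
/- Assume b > 1 and 0 < |ξ|² < a·c. Let β > 0 satisfy det(A - β²B) = 0 and a + c - (b+1)β² ≠ 0, and set λ_even := 5β(ab + c - 2β²b)/(a + c - (b+1)β²) and λ_odd := 7β(ab + c - 2β²b)/(a + c - (b+1)β²). Then the two equations 2 λ_even [a + c - (b+1)β²] = 5β(β - λ_even)(λ_even - βb) and 6 λ_odd [a + c - (b+1)β²] = 7β(3β - λ_odd)(λ_odd - 3βb) cannot both hold. (Equivalently, with the same choice of root β, the regions Ω_even and Ω_odd of parameter tetrads (b, a, c, |ξ|) satisfying the respective equations are disjoint.) -/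
/-!
Write `D = a + c - (b+1)β²` and `M = ab + c - 2β²b`, so that `λ_even = 5βM/D` and
`λ_odd = 7βM/D`. Cleared of denominators, three times the even condition minus the odd one
leaves the quadratic form `3bD² - 3(1+b)DM - 13M² = 0`. On the other hand
`D - M = (b-1)(β² - a)` and `M - bD = (b-1)(bβ² - c)`, so by the determinant condition
`(D - M)(M - bD) = (b-1)²|ξ|² > 0`. In the variables `p = D - M`, `q = M - bD` the quadratic
form becomes `-(16b²p² + (3b² + 26b + 3)pq + 16q²)/(b-1)²`, which is negative when `pq > 0`.
-/

theorem det_Amat_sub_smul_Bmat (a c b : ℝ) (ξ : ℂ) (t : ℂ) :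
    (Amat a c ξ - t • Bmat b).det = (a - t) * (c - b * t) - Complex.normSq ξ := by
  rw [Matrix.det_fin_two, ← Complex.mul_conj]
  simp only [Amat, Bmat, Matrix.sub_apply, Matrix.smul_apply, Matrix.of_apply,
    Matrix.cons_val', Matrix.cons_val_zero, Matrix.cons_val_one, Matrix.empty_val',
    Matrix.cons_val_fin_one, smul_eq_mul]
  ring

theorem mul_eq_norm_sq_of_det_eq_zero {a c b β : ℝ} {ξ : ℂ}
    (h : (Amat a c ξ - ((β : ℂ) ^ 2) • Bmat b).det = 0) :
    (a - β ^ 2) * (c - b * β ^ 2) = ‖ξ‖ ^ 2 := by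
  rw [det_Amat_sub_smul_Bmat, sub_eq_zero] at h
  rw [Complex.sq_norm]
  exact_mod_cast h

theorem quadratic_eq_zero_of_even_odd_conditions {β b D M : ℝ} (hβ : β ≠ 0) (hD : D ≠ 0)
    (hE : 2 * (5 * β * M / D) * D = 5 * β * (β - 5 * β * M / D) * (5 * β * M / D - β * b))
    (hO : 6 * (7 * β * M / D) * D =
      7 * β * (3 * β - 7 * β * M / D) * (7 * β * M / D - 3 * β * b)) :
    3 * b * D ^ 2 - 3 * (1 + b) * D * M - 13 * M ^ 2 = 0 := by
  field_simp at hE hO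
  have h : β ^ 3 * (3 * b * D ^ 2 - 3 * (1 + b) * D * M - 13 * M ^ 2) = 0 := by
    linear_combination (-3 / 2 * β) * hE + (1 / 2 * β) * hO
  exact (mul_eq_zero.mp h).resolve_left (pow_ne_zero 3 hβ)

theorem quadratic_neg_of_mul_pos {b D M : ℝ} (hb : 0 < b) (h : 0 < (D - M) * (M - b * D)) :
    3 * b * D ^ 2 - 3 * (1 + b) * D * M - 13 * M ^ 2 < 0 := by
  have key : (b - 1) ^ 2 * (3 * b * D ^ 2 - 3 * (1 + b) * D * M - 13 * M ^ 2) =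
      -(16 * b ^ 2 * (D - M) ^ 2 + (3 * b ^ 2 + 26 * b + 3) * ((D - M) * (M - b * D)) +
        16 * (M - b * D) ^ 2) := by
    ring
  have hneg : (b - 1) ^ 2 * (3 * b * D ^ 2 - 3 * (1 + b) * D * M - 13 * M ^ 2) < 0 := by
    rw [key]
    have : 0 < (3 * b ^ 2 + 26 * b + 3) * ((D - M) * (M - b * D)) := by positivity
    nlinarith [sq_nonneg (D - M), sq_nonneg (M - b * D)]
  exact neg_of_mul_neg_right hneg (sq_nonneg _)

theorem even_and_odd_conditions_disjoint_general
    (a c b : ℝ) (ξ : ℂ) (hb : 1 < b)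
    (hξ : 0 < ‖ξ‖ ^ 2)
    (β : ℝ) (hβ : 0 < β)
    (hdet : (Amat a c ξ - ((β : ℂ) ^ 2) • Bmat b).det = 0)
    (hne : a + c - (b + 1) * β ^ 2 ≠ 0)
    (lamE lamO : ℝ)
    (hlamE : lamE = 5 * β * (a * b + c - 2 * β ^ 2 * b) / (a + c - (b + 1) * β ^ 2))
    (hlamO : lamO = 7 * β * (a * b + c - 2 * β ^ 2 * b) / (a + c - (b + 1) * β ^ 2)) :
    ¬(2 * lamE * (a + c - (b + 1) * β ^ 2) = 5 * β * (β - lamE) * (lamE - β * b) ∧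
      6 * lamO * (a + c - (b + 1) * β ^ 2) = 7 * β * (3 * β - lamO) * (lamO - 3 * β * b)) := by
  rintro ⟨hE, hO⟩
  subst hlamE hlamO
  set D := a + c - (b + 1) * β ^ 2
  set M := a * b + c - 2 * β ^ 2 * b
  have hQ := quadratic_eq_zero_of_even_odd_conditions hβ.ne' hne hE hO
  have hpq : 0 < (D - M) * (M - b * D) := by
    rw [show (D - M) * (M - b * D) = (b - 1) ^ 2 * ((a - β ^ 2) * (c - b * β ^ 2)) by ring,
      mul_eq_norm_sq_of_det_eq_zero hdet]
    positivity
  exact (quadratic_neg_of_mul_pos (by linarith) hpq).ne hQ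

/-- STATEMENT 14: with the same root `β`, the even-case condition
`2λ_even[a+c-(b+1)β²] = 5β(β-λ_even)(λ_even-βb)` and the odd-case condition
`6λ_odd[a+c-(b+1)β²] = 7β(3β-λ_odd)(λ_odd-3βb)` cannot both hold. -/
theorem even_and_odd_conditions_disjoint
    (a c b : ℝ) (ξ : ℂ) (ha : 0 < a) (hc : 0 < c) (hb : 1 < b)
    (hξ : 0 < ‖ξ‖ ^ 2) (hξ' : ‖ξ‖ ^ 2 < a * c)
    (β : ℝ) (hβ : 0 < β)
    (hdet : (Amat a c ξ - ((β : ℂ) ^ 2) • Bmat b).det = 0)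
    (hne : a + c - (b + 1) * β ^ 2 ≠ 0)
    (lamE lamO : ℝ)
    (hlamE : lamE = 5 * β * (a * b + c - 2 * β ^ 2 * b) / (a + c - (b + 1) * β ^ 2))
    (hlamO : lamO = 7 * β * (a * b + c - 2 * β ^ 2 * b) / (a + c - (b + 1) * β ^ 2)) :
    ¬(2 * lamE * (a + c - (b + 1) * β ^ 2) = 5 * β * (β - lamE) * (lamE - β * b) ∧
      6 * lamO * (a + c - (b + 1) * β ^ 2) = 7 * β * (3 * β - lamO) * (lamO - 3 * β * b)) :=
  even_and_odd_conditions_disjoint_general a c b ξ hb hξ β hβ hdet hne lamE lamO hlamE hlamO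
end

section
/- Let p and q be polynomials with complex coefficients, not both zero, let α, β > 0 with α ≠ β, and let λ ∈ ℝ. If the function Φ(x) := (p(x) e^{-α x²/2}, q(x) e^{-β x²/2}) satisfies -B·Φ''(x) + x²·A·Φ(x) = λ·Φ(x) for all x ∈ ℝ, then ξ = 0 (so AB = BA). In other words, an eigenfunction of H_{A,B} given by a finite expansion mixing two different Gaussian scales α ≠ β can exist only in the commutative case ξ = 0. -/
open Polynomial

noncomputable def polyGauss (γ : ℝ) (r : ℂ[X]) (x : ℝ) : ℂ :=
  r.eval (x : ℂ) * ((Real.exp (-γ * x ^ 2 / 2) : ℝ) : ℂ)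

noncomputable def gaussShift (γ : ℝ) (r : ℂ[X]) : ℂ[X] :=
  derivative r - C (γ : ℂ) * X * r

theorem hasDerivAt_polyGauss (γ : ℝ) (r : ℂ[X]) (x : ℝ) :
    HasDerivAt (polyGauss γ r) (polyGauss γ (gaussShift γ r) x) x := by
  have hr : HasDerivAt (fun x : ℝ => r.eval (x : ℂ)) (r.derivative.eval (x : ℂ)) x := by
    simpa using (r.hasDerivAt (x : ℂ)).comp_ofReal
  have harg : HasDerivAt (fun x : ℝ => -γ * x ^ 2 / 2) (-γ * x) x :=
    (((hasDerivAt_pow 2 x).const_mul (-γ)).div_const 2).congr_deriv (by push_cast; ring)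
  refine (hr.mul harg.exp.ofReal_comp).congr_deriv ?_
  simp only [polyGauss, gaussShift, eval_sub, eval_mul, eval_C, eval_X]
  push_cast
  ring

theorem deriv_polyGauss (γ : ℝ) (r : ℂ[X]) :
    deriv (polyGauss γ r) = polyGauss γ (gaussShift γ r) :=
  funext fun x => (hasDerivAt_polyGauss γ r x).deriv

@[simp]
theorem polyGauss_zero (γ : ℝ) : polyGauss γ 0 = 0 := by
  ext x
  simp [polyGauss]

theorem Polynomial.eq_zero_of_forall_eval_ofReal_eq_zero {P : ℂ[X]}
    (h : ∀ x : ℝ, P.eval (x : ℂ) = 0) : P = 0 :=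
  P.eq_zero_of_infinite_isRoot <| (Set.infinite_range_of_injective Complex.ofReal_injective).mono
    (Set.range_subset_iff.2 h)

theorem polyGauss_eq_zero_iff {γ : ℝ} {r : ℂ[X]} : polyGauss γ r = 0 ↔ r = 0 := by
  refine ⟨fun h => eq_zero_of_forall_eval_ofReal_eq_zero fun x => ?_, ?_⟩
  · have hx := congrFun h x
    simpa [polyGauss, (Real.exp_pos _).ne'] using hx
  · rintro rfl
    exact polyGauss_zero γ

theorem Polynomial.mul_eq_zero_of_wronskian_eq_C_mul_X_mul {R : Type*} [CommRing R] [IsDomain R]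
    {P Q : R[X]} {k : R} (hk : k ≠ 0) (h : wronskian P Q = C k * X * (P * Q)) :
    P * Q = 0 := by
  by_contra hPQ
  have hP : P ≠ 0 := left_ne_zero_of_mul hPQ
  have hQ : Q ≠ 0 := right_ne_zero_of_mul hPQ
  have hlt := degree_wronskian_lt_add hP hQ
  rw [h, degree_mul, degree_mul, degree_mul, degree_C hk, degree_X, zero_add] at hlt
  rw [degree_eq_natDegree hP, degree_eq_natDegree hQ] at hlt
  norm_cast at hlt
  omega

theorem eq_zero_of_polyGauss_add_polyGauss_eq_zero {α β : ℝ} (hαβ : α ≠ β) {P Q : ℂ[X]}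
    (h : polyGauss α P + polyGauss β Q = 0) : P = 0 ∧ Q = 0 := by
  have hderiv : polyGauss α (gaussShift α P) + polyGauss β (gaussShift β Q) = 0 := by
    funext x
    have hsum : HasDerivAt (polyGauss α P + polyGauss β Q) _ x :=
      (hasDerivAt_polyGauss α P x).add (hasDerivAt_polyGauss β Q x)
    rw [h] at hsum
    exact hsum.unique (hasDerivAt_const x 0)
  -- Eliminating the `β`-Gaussian between `h` and its derivative.
  have hcross : P * gaussShift β Q - gaussShift α P * Q = 0 := by
    refine (polyGauss_eq_zero_iff (γ := α)).1 (funext fun x => ?_)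
    have h₀ := congrFun h x
    have h₁ := congrFun hderiv x
    simp only [polyGauss, Pi.add_apply, Pi.zero_apply, eval_sub, eval_mul] at h₀ h₁ ⊢
    linear_combination (gaussShift β Q).eval (x : ℂ) * h₀ - Q.eval (x : ℂ) * h₁
  have hW : wronskian P Q = C ((β : ℂ) - α) * X * (P * Q) := by
    simp only [gaussShift] at hcross
    rw [wronskian, map_sub]
    linear_combination hcross
  have hβα : (β : ℂ) - α ≠ 0 := sub_ne_zero.2 (by exact_mod_cast hαβ.symm)
  rcases mul_eq_zero.1 (mul_eq_zero_of_wronskian_eq_C_mul_X_mul hβα hW) with hP | hQ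
  · subst hP
    simpa [polyGauss_eq_zero_iff] using h
  · subst hQ
    simpa [polyGauss_eq_zero_iff] using h

theorem hasDerivAt_vec2 {𝕜 F : Type*} [NontriviallyNormedField 𝕜] [NormedAddCommGroup F]
    [NormedSpace 𝕜 F] {f g : 𝕜 → F} {f' g' : F} {x : 𝕜} (hf : HasDerivAt f f' x)
    (hg : HasDerivAt g g' x) : HasDerivAt (fun x => ![f x, g x]) ![f', g'] x :=
  hasDerivAt_pi.2 (Fin.forall_fin_two.2 ⟨hf, hg⟩)

theorem deriv_vec2_polyGauss (α β : ℝ) (r s : ℂ[X]) :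
    deriv (fun x => ![polyGauss α r x, polyGauss β s x]) =
      fun x => ![polyGauss α (gaussShift α r) x, polyGauss β (gaussShift β s) x] :=
  funext fun x =>
    (hasDerivAt_vec2 (hasDerivAt_polyGauss α r x) (hasDerivAt_polyGauss β s x)).deriv

theorem polyGauss_add_polyGauss_eq_zero_of_eigen {a c b l α β : ℝ} {ξ : ℂ} {p q : ℂ[X]}
    (heq : ∀ x : ℝ, -((Bmat b).mulVec (deriv (deriv
          (fun x => ![polyGauss α p x, polyGauss β q x])) x))
        + ((x : ℂ) ^ 2) • (Amat a c ξ).mulVec ![polyGauss α p x, polyGauss β q x] =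
          (l : ℂ) • ![polyGauss α p x, polyGauss β q x]) :
    polyGauss α (C (a : ℂ) * X ^ 2 * p - C (l : ℂ) * p - gaussShift α (gaussShift α p)) +
        polyGauss β (C ξ * X ^ 2 * q) = 0 ∧
      polyGauss α (C (starRingEnd ℂ ξ) * X ^ 2 * p) +
        polyGauss β (C (c : ℂ) * X ^ 2 * q - C (l : ℂ) * q -
          C (b : ℂ) * gaussShift β (gaussShift β q)) = 0 := by
  simp only [deriv_vec2_polyGauss] at heq
  refine ⟨funext fun x => ?_, funext fun x => ?_⟩
  all_goals
    have h₀ := congrFun (heq x) 0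
    have h₁ := congrFun (heq x) 1
    simp only [Bmat, Amat, polyGauss, Matrix.mulVec_cons, Matrix.mulVec_empty, Pi.add_apply,
      Pi.neg_apply, Pi.smul_apply, Pi.zero_apply, Function.comp_apply, Matrix.cons_val_zero,
      Matrix.cons_val_one, Matrix.cons_val_fin_one, Matrix.head_cons, Matrix.tail_cons,
      smul_eq_mul, add_zero, eval_sub, eval_mul, eval_C, eval_pow, eval_X] at h₀ h₁ ⊢
  · linear_combination h₀
  · linear_combination h₁

theorem mixed_scales_eigenfunction_implies_xi_zero_general
    (a c b : ℝ) (ξ : ℂ)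
    (p q : Polynomial ℂ) (hpq : ¬(p = 0 ∧ q = 0))
    (α β : ℝ) (hαβ : α ≠ β) (l : ℝ)
    (Φ : ℝ → Fin 2 → ℂ)
    (hΦ : Φ = fun x : ℝ => ![p.eval (x : ℂ) * ((Real.exp (-α * x ^ 2 / 2) : ℝ) : ℂ),
                             q.eval (x : ℂ) * ((Real.exp (-β * x ^ 2 / 2) : ℝ) : ℂ)])
    (heq : ∀ x : ℝ, -((Bmat b).mulVec (deriv (deriv Φ) x))
        + ((x : ℂ) ^ 2) • (Amat a c ξ).mulVec (Φ x) = (l : ℂ) • Φ x) :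
    ξ = 0 := by
  subst hΦ
  obtain ⟨h₀, h₁⟩ := polyGauss_add_polyGauss_eq_zero_of_eigen heq
  by_contra hξ
  have hq : q = 0 := by simpa [hξ] using (eq_zero_of_polyGauss_add_polyGauss_eq_zero hαβ h₀).2
  have hp : p = 0 := by simpa [hξ] using (eq_zero_of_polyGauss_add_polyGauss_eq_zero hαβ h₁).1
  exact hpq ⟨hp, hq⟩

/-- STATEMENT 18: if `Φ(x) = (p(x)e^{-αx²/2}, q(x)e^{-βx²/2})` with polynomials `p, q`
not both zero and distinct Gaussian scales `α ≠ β` satisfies `-BΦ'' + x²AΦ = λΦ`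
everywhere, then `ξ = 0` (the commutative case). -/
theorem mixed_scales_eigenfunction_implies_xi_zero
    (a c b : ℝ) (ξ : ℂ) (ha : 0 < a) (hc : 0 < c) (hb : 1 ≤ b)
    (hξ : ‖ξ‖ ^ 2 < a * c)
    (p q : Polynomial ℂ) (hpq : ¬(p = 0 ∧ q = 0))
    (α β : ℝ) (hα : 0 < α) (hβ : 0 < β) (hαβ : α ≠ β) (l : ℝ)
    (Φ : ℝ → Fin 2 → ℂ)
    (hΦ : Φ = fun x : ℝ => ![p.eval (x : ℂ) * ((Real.exp (-α * x ^ 2 / 2) : ℝ) : ℂ),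
                             q.eval (x : ℂ) * ((Real.exp (-β * x ^ 2 / 2) : ℝ) : ℂ)])
    (heq : ∀ x : ℝ, -((Bmat b).mulVec (deriv (deriv Φ) x))
        + ((x : ℂ) ^ 2) • (Amat a c ξ).mulVec (Φ x) = (l : ℂ) • Φ x) :
    ξ = 0 :=
  mixed_scales_eigenfunction_implies_xi_zero_general a c b ξ p q hpq α β hαβ l Φ hΦ heq
end
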